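/- Let f be a submodular function on N with f(∅) ≥ 0, and let A = {a_1 < ... < a_r} be an ordered set with prefixes A_j = {a_1,...,a_j} (A_0 = ∅). Suppose Ô is a finite set disjoint from A equipped with a map θ : Ô → A such that ∑_{u ∈ θ^{-1}(a_j)} f(u | A_{j-1}) ≤ f(a_j | A_{j-1}) for every j. Then f(Ô ∪ A) ≤ 2·f(A) - f(∅). -/
import Mathlib

def Submodular {N : Type*} [DecidableEq N] (f : Finset N → ℝ) : Prop :=
  ∀ X Y : Finset N, f (X ∪ Y) + f (X ∩ Y) ≤ f X + f Y

/-- The prefix `{a_0, ..., a_{j-1}}` of an injectively enumerated set. -/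
def prefixSet {N : Type*} [DecidableEq N] {r : ℕ} (a : Fin r → N) (j : ℕ) : Finset N :=
  (Finset.univ.filter (fun i : Fin r => (i : ℕ) < j)).image a

lemma marg {N : Type*} [DecidableEq N] {f : Finset N → ℝ} (hsub : Submodular f)
    {S T : Finset N} (hST : S ⊆ T) {x : N} (hx : x ∉ T) :
    f (insert x T) - f T ≤ f (insert x S) - f S := by
  have h := hsub (insert x S) T
  have h1 : insert x S ∪ T = insert x T := by
    ext y; simp [Finset.mem_insert, Finset.mem_union]
    constructor
    · rintro (h | h | h) <;> [exact Or.inl h; exact Or.inr (hST h); exact Or.inr h]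
    · rintro (h | h) <;> [exact Or.inl h; exact Or.inr (Or.inr h)]
  have h2 : insert x S ∩ T = S := by
    ext y; simp only [Finset.mem_inter, Finset.mem_insert]
    constructor
    · rintro ⟨h | h, hT⟩
      · exact absurd (h ▸ hT) hx
      · exact h
    · exact fun h => ⟨Or.inr h, hST h⟩
  rw [h1, h2] at h; linarith

lemma union_bound {N : Type*} [DecidableEq N] {f : Finset N → ℝ} (hsub : Submodular f)
    (T : Finset N) (B : Finset N) (hB : ∀ u ∈ B, u ∉ T) :
    f (B ∪ T) - f T ≤ ∑ u ∈ B, (f (insert u T) - f T) := by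
  induction B using Finset.induction_on with
  | empty => simp
  | @insert x B hx ih =>
    have hB' : ∀ u ∈ B, u ∉ T := fun u hu => hB u (Finset.mem_insert_of_mem hu)
    have hxT : x ∉ T := hB x (Finset.mem_insert_self x B)
    have hxBT : x ∉ B ∪ T := by simp [hx, hxT]
    have h1 : f (insert x (B ∪ T)) - f (B ∪ T) ≤ f (insert x T) - f T :=
      marg hsub Finset.subset_union_right hxBT
    rw [Finset.sum_insert hx, Finset.insert_union]
    linarith [ih hB']

/-- aggregated greedy domination.  If a map `θ : Ô → A` satisfies
the per-target marginal bound `∑_{u ∈ θ⁻¹(a_j)} f(u | A_{j-1}) ≤ f(a_j | A_{j-1})`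
for every `j`, then `f(Ô ∪ A) ≤ 2 f(A) - f(∅)`. -/
theorem stmt16 {N : Type*} [DecidableEq N]
    (f : Finset N → ℝ) (hsub : Submodular f) (h0 : 0 ≤ f ∅)
    (r : ℕ) (a : Fin r → N) (ha : Function.Injective a)
    (Ohat : Finset N) (hdisj : ∀ u ∈ Ohat, ∀ j : Fin r, u ≠ a j)
    (θ : N → Fin r)
    (hθ : ∀ j : Fin r,
      ∑ u ∈ Ohat.filter (fun u => θ u = j),
          (f (insert u (prefixSet a j)) - f (prefixSet a j)) ≤
        f (insert (a j) (prefixSet a j)) - f (prefixSet a j)) :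
    f (Ohat ∪ prefixSet a r) ≤ 2 * f (prefixSet a r) - f ∅ := by
  set A := prefixSet a r with hA
  have hmemA : ∀ u ∈ Ohat, u ∉ A := by
    intro u hu hmem
    simp only [hA, prefixSet, Finset.mem_image, Finset.mem_filter] at hmem
    obtain ⟨i, _, hi⟩ := hmem
    exact hdisj u hu i hi.symm
  have hpre_sub : ∀ j : ℕ, prefixSet a j ⊆ A := by
    intro j
    apply Finset.image_subset_image
    intro i hi
    simp [i.isLt]
  -- step 1
  have step1 : f (Ohat ∪ A) - f A ≤ ∑ u ∈ Ohat, (f (insert u A) - f A) :=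
    union_bound hsub A Ohat hmemA
  -- step 2: pointwise
  have step2 : ∑ u ∈ Ohat, (f (insert u A) - f A) ≤
      ∑ u ∈ Ohat, (f (insert u (prefixSet a (θ u))) - f (prefixSet a (θ u))) := by
    apply Finset.sum_le_sum
    intro u hu
    exact marg hsub (hpre_sub (θ u)) (hmemA u hu)
  -- step 3: fiberwise
  have step3 : ∑ u ∈ Ohat, (f (insert u (prefixSet a (θ u))) - f (prefixSet a (θ u))) =
      ∑ j : Fin r, ∑ u ∈ Ohat.filter (fun u => θ u = j),
        (f (insert u (prefixSet a j)) - f (prefixSet a j)) := by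
    rw [← Finset.sum_fiberwise Ohat θ
      (fun u => f (insert u (prefixSet a (θ u))) - f (prefixSet a (θ u)))]
    apply Finset.sum_congr rfl
    intro j _
    apply Finset.sum_congr rfl
    intro u hu
    simp only [Finset.mem_filter] at hu
    rw [hu.2]
  -- step 4: insert a j into prefix = next prefix
  have hins : ∀ j : Fin r, insert (a j) (prefixSet a j) = prefixSet a (j + 1) := by
    intro j
    ext x
    simp only [Finset.mem_insert, prefixSet, Finset.mem_image, Finset.mem_filter,
      Finset.mem_univ, true_and]
    constructor
    · rintro (h | ⟨i, hi, hix⟩)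
      · exact ⟨j, Nat.lt_succ_self _, h.symm⟩
      · exact ⟨i, Nat.lt_succ_of_lt hi, hix⟩
    · rintro ⟨i, hi, hix⟩
      rcases Nat.lt_succ_iff_lt_or_eq.mp hi with h | h
      · exact Or.inr ⟨i, h, hix⟩
      · left; rw [← hix]; congr 1; exact Fin.ext h
  have step4 : ∑ j : Fin r, (f (insert (a j) (prefixSet a j)) - f (prefixSet a j)) =
      f A - f ∅ := by
    have : ∀ j : Fin r, f (insert (a j) (prefixSet a j)) - f (prefixSet a j) =
        f (prefixSet a (j + 1)) - f (prefixSet a j) := by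
      intro j; rw [hins j]
    rw [Finset.sum_congr rfl (fun j _ => this j)]
    rw [Fin.sum_univ_eq_sum_range (fun j => f (prefixSet a (j + 1)) - f (prefixSet a j))]
    rw [Finset.sum_range_sub (fun j => f (prefixSet a j))]
    have h1 : prefixSet a 0 = ∅ := by simp [prefixSet]
    rw [h1, hA]
  have step5 : ∑ j : Fin r, ∑ u ∈ Ohat.filter (fun u => θ u = j),
        (f (insert u (prefixSet a j)) - f (prefixSet a j)) ≤
      ∑ j : Fin r, (f (insert (a j) (prefixSet a j)) - f (prefixSet a j)) :=
    Finset.sum_le_sum (fun j _ => hθ j)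
  linarith [step1, step2, step3 ▸ le_trans (le_of_eq step3) (le_trans step5 (le_of_eq step4))]
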